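/- arXiv:1507.07221 — 10 statements merged into one kernel-verified Lean document; each statement's English description precedes it below -/
import Mathlib

section
/- Let x be a real 2×2 matrix with trace x = 0 and det x < 0, and set α = √(−det x). Then exp(x) = cosh(α)·1 + (sinh(α)/α)·x, where 1 denotes the 2×2 identity matrix. -/
open NormedSpace

set_option maxHeartbeats 1000000 in
theorem exp_of_trace_eq_zero_det_neg (x : Matrix (Fin 2) (Fin 2) ℝ)
    (htr : x.trace = 0) (hdet : x.det < 0) :
    exp x = Real.cosh (Real.sqrt (-x.det)) • (1 : Matrix (Fin 2) (Fin 2) ℝ) +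
      (Real.sinh (Real.sqrt (-x.det)) / Real.sqrt (-x.det)) • x := by
  set α : ℝ := Real.sqrt (-x.det) with hα
  have hα0 : 0 < α := Real.sqrt_pos.mpr (by linarith)
  have hαsq : α ^ 2 = -x.det := Real.sq_sqrt (by linarith)
  have htr' : x 1 1 = -x 0 0 := by
    have := htr
    rw [Matrix.trace_fin_two] at this
    linarith
  -- x * x = α² • 1
  have hx2 : x * x = (α ^ 2) • (1 : Matrix (Fin 2) (Fin 2) ℝ) := by
    rw [hαsq]
    ext i j
    rw [Matrix.det_fin_two]
    fin_cases i <;> fin_cases j <;>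
      simp [Matrix.mul_apply, Fin.sum_univ_two, htr', Matrix.one_apply] <;> ring
  -- powers
  have heven : ∀ k : ℕ, x ^ (2 * k) = (α ^ (2 * k)) • (1 : Matrix (Fin 2) (Fin 2) ℝ) := by
    intro k
    induction k with
    | zero => simp
    | succ n ih =>
        have : 2 * (n + 1) = 2 * n + 1 + 1 := by ring
        rw [this, pow_succ, pow_succ, ih, smul_mul_assoc, one_mul, smul_mul_assoc, hx2,
          smul_smul]
        congr 1
        ring
  have hodd : ∀ k : ℕ, x ^ (2 * k + 1) = (α ^ (2 * k)) • x := by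
    intro k
    rw [pow_succ, heven k, smul_mul_assoc, one_mul]
  -- sum
  rw [exp_eq_tsum (𝕂 := ℝ)]
  refine HasSum.tsum_eq ?_
  have hc : HasSum (fun k : ℕ => ((Nat.factorial (2 * k) : ℝ))⁻¹ • x ^ (2 * k))
      (Real.cosh α • (1 : Matrix (Fin 2) (Fin 2) ℝ)) := by
    have := (Real.hasSum_cosh α).smul_const (1 : Matrix (Fin 2) (Fin 2) ℝ)
    convert this using 2 with k
    rw [heven k, smul_smul]
    congr 1
    field_simp
  have hs : HasSum (fun k : ℕ => ((Nat.factorial (2 * k + 1) : ℝ))⁻¹ • x ^ (2 * k + 1))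
      ((Real.sinh α / α) • x) := by
    have := ((Real.hasSum_sinh α).div_const α).smul_const x
    convert this using 2 with k
    rw [hodd k, smul_smul]
    congr 1
    rw [pow_succ]
    field_simp
  exact hc.even_add_odd hs
end

section
/- Let x be a real 2×2 matrix with trace x = 0 and det x > 0, and set α = √(det x). Then exp(x) = cos(α)·1 + (sin(α)/α)·x, where 1 denotes the 2×2 identity matrix. -/
open NormedSpace

attribute [local instance] Matrix.linftyOpNormedRing Matrix.linftyOpNormedAlgebra

theorem exp_of_trace_eq_zero_det_pos (x : Matrix (Fin 2) (Fin 2) ℝ)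
    (htr : x.trace = 0) (hdet : 0 < x.det) :
    exp x = Real.cos (Real.sqrt x.det) • (1 : Matrix (Fin 2) (Fin 2) ℝ) +
      (Real.sin (Real.sqrt x.det) / Real.sqrt x.det) • x := by
  set α := Real.sqrt x.det with hα
  have hα0 : 0 < α := Real.sqrt_pos.mpr hdet
  have hαsq : α ^ 2 = x.det := Real.sq_sqrt hdet.le
  -- Cayley-Hamilton for traceless 2x2: x * x = -det x • 1
  have hsq : x * x = (-x.det) • (1 : Matrix (Fin 2) (Fin 2) ℝ) := by
    have h11 : x 1 1 = -x 0 0 := by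
      have := Matrix.trace_fin_two x
      rw [htr] at this; linarith
    ext i j
    rw [Matrix.det_fin_two]
    fin_cases i <;> fin_cases j <;>
      simp [Matrix.mul_apply, Fin.sum_univ_two, Matrix.one_apply, h11] <;> ring
  set J : Matrix (Fin 2) (Fin 2) ℝ := (α⁻¹ • x) with hJ
  have hJ2 : J * J = -1 := by
    rw [hJ, Matrix.smul_mul, Matrix.mul_smul, hsq, smul_smul, smul_smul]
    have hval : α⁻¹ * α⁻¹ * -x.det = -1 := by
      rw [← hαsq]; field_simp
    rw [mul_assoc] at hval ⊢
    rw [hval, neg_one_smul]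
  set f := Complex.liftAux J hJ2 with hf
  have hcont : Continuous f := f.toLinearMap.continuous_of_finiteDimensional
  have hfx : f (α * Complex.I) = x := by
    rw [hf, Complex.liftAux_apply]
    simp [hJ, smul_smul, mul_inv_cancel₀ hα0.ne']
  have key := map_exp f hcont ((α : ℂ) * Complex.I)
  rw [hfx] at key
  refine Eq.trans key.symm ?_
  have : exp ((α : ℂ) * Complex.I) = Complex.exp ((α : ℂ) * Complex.I) := by
    rw [Complex.exp_eq_exp_ℂ]
  rw [this, Complex.exp_mul_I]
  have hre : ∀ r : ℝ, f (r : ℂ) = r • (1 : Matrix (Fin 2) (Fin 2) ℝ) := by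
    intro r
    rw [hf, Complex.liftAux_apply]
    simp [Algebra.algebraMap_eq_smul_one]
  rw [map_add, map_mul, ← Complex.ofReal_cos, ← Complex.ofReal_sin, hre, hre,
    show f Complex.I = J from Complex.liftAux_apply_I J hJ2]
  congr 1
  rw [hJ, Matrix.smul_mul, Matrix.one_mul, smul_smul, div_eq_mul_inv]
end

section
/- Let p₁ = !![1/2, 0; 0, −1/2], p₂ = !![0, 1/2; 1/2, 0], k = !![0, −1/2; 1/2, 0], and fix β, φ ∈ ℝ. Define γ : ℝ → (real 2×2 matrices) by γ(t) = exp(t·(cos(φ)·p₁ + sin(φ)·p₂ + β·k)) · exp(−t·β·k). Then for every t ∈ ℝ, γ has derivative at t equal to γ(t)·(cos(βt + φ)·p₁ + sin(βt + φ)·p₂). -/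
/-! Write `X = P φ + β • k` with `P θ = cos θ • p₁ + sin θ • p₂` and `E = exp (-(tβ) • k)`.
The product rule gives `γ' t = exp (t • X) * (X * E - β • E * k)`, and since `E` commutes with `k`
this is `exp (t • X) * P φ * E`. As `(2k)² = -1`, `E` is the rotation by `-tβ/2`, and conjugating
by a rotation by `a` turns `P φ` into `P (φ - 2a)`, so `P φ * E = E * P (φ + βt)`. -/

open NormedSpace Filter Topology

theorem exp_smul_eq_cos_smul_one_add_sin_smul {A : Type*} [NormedRing A] [NormedAlgebra ℝ A]
    [Algebra ℚ A] (J : A) (hJ : J * J = -1) (s : ℝ) :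
    exp (s • J) = Real.cos s • (1 : A) + Real.sin s • J := by
  let f : ℂ →ₐ[ℝ] A := Complex.lift ⟨J, hJ⟩
  have hf : Continuous f := f.toLinearMap.continuous_of_finiteDimensional
  have hsJ : f (s * Complex.I) = s • J := by simp [f]
  rw [← hsJ, ← map_exp f hf, ← Complex.exp_eq_exp_ℂ, Complex.exp_mul_I]
  simp [f, ← Complex.ofReal_cos, ← Complex.ofReal_sin, Algebra.algebraMap_eq_smul_one]

theorem hasDerivAt_exp_smul_mul_exp_smul {𝕂 A : Type*} [RCLike 𝕂] [NormedRing A]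
    [NormedAlgebra 𝕂 A] [CompleteSpace A] (X Y : A) (t : 𝕂) :
    HasDerivAt (fun u : 𝕂 => exp (u • X) * exp (u • Y))
      (exp (t • X) * (X * exp (t • Y) + exp (t • Y) * Y)) t := by
  rw [mul_add, ← mul_assoc]
  exact (hasDerivAt_exp_smul_const X t).mul (hasDerivAt_exp_smul_const Y t)

section LinftyOpNorm

attribute [local instance] Matrix.linftyOpNormedRing Matrix.linftyOpNormedAlgebra

/- Stated through slopes, which only see the topology: this transfers the derivative computed
with the submultiplicative `L∞` operator norm to any other norm on matrices. -/
theorem Matrix.tendsto_slope_exp_smul_mul_exp_smul {𝕂 n : Type*} [RCLike 𝕂] [Fintype n]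
    [DecidableEq n] (X Y : Matrix n n 𝕂) (t : 𝕂) :
    Tendsto (slope (fun u : 𝕂 => exp (u • X) * exp (u • Y)) t) (𝓝[≠] t)
      (𝓝 (exp (t • X) * (X * exp (t • Y) + exp (t • Y) * Y))) :=
  hasDerivAt_iff_tendsto_slope.mp (hasDerivAt_exp_smul_mul_exp_smul X Y t)

theorem Matrix.exp_smul_skew_fin_two (s : ℝ) :
    exp (s • !![(0 : ℝ), -1/2; 1/2, 0]) =
      Real.cos (s / 2) • (1 : Matrix (Fin 2) (Fin 2) ℝ) +
        Real.sin (s / 2) • !![(0 : ℝ), -1; 1, 0] := by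
  have hJ : !![(0 : ℝ), -1; 1, 0] * !![(0 : ℝ), -1; 1, 0] = -1 := by
    simp [Matrix.one_fin_two]
  rw [← exp_smul_eq_cos_smul_one_add_sin_smul _ hJ]
  congr 1
  ext i j
  fin_cases i <;> fin_cases j <;> simp <;> ring

end LinftyOpNorm

theorem Matrix.mul_rotation_fin_two (φ a : ℝ) :
    (Real.cos φ • !![(1/2 : ℝ), 0; 0, -1/2] + Real.sin φ • !![(0 : ℝ), 1/2; 1/2, 0]) *
        (Real.cos a • (1 : Matrix (Fin 2) (Fin 2) ℝ) + Real.sin a • !![(0 : ℝ), -1; 1, 0]) =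
      (Real.cos a • (1 : Matrix (Fin 2) (Fin 2) ℝ) + Real.sin a • !![(0 : ℝ), -1; 1, 0]) *
        (Real.cos (φ - 2 * a) • !![(1/2 : ℝ), 0; 0, -1/2] +
          Real.sin (φ - 2 * a) • !![(0 : ℝ), 1/2; 1/2, 0]) := by
  obtain ⟨ψ, rfl⟩ : ∃ ψ, φ = ψ + a := ⟨φ - a, by ring⟩
  rw [show ψ + a - 2 * a = ψ - a by ring, Real.cos_add, Real.sin_add, Real.cos_sub, Real.sin_sub]
  ext i j
  fin_cases i <;> fin_cases j <;> simp [Matrix.mul_apply, Fin.sum_univ_two, Matrix.one_apply] <;>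
    ring

attribute [local instance] Matrix.normedAddCommGroup Matrix.normedSpace

theorem hasDerivAt_geodesic
    (p₁ p₂ k : Matrix (Fin 2) (Fin 2) ℝ)
    (hp₁ : p₁ = !![1/2, 0; 0, -1/2])
    (hp₂ : p₂ = !![0, 1/2; 1/2, 0])
    (hk : k = !![0, -1/2; 1/2, 0])
    (β φ : ℝ)
    (γ : ℝ → Matrix (Fin 2) (Fin 2) ℝ)
    (hγ : ∀ t : ℝ, γ t =
      exp (t • (Real.cos φ • p₁ + Real.sin φ • p₂ + β • k)) * exp ((-(t * β)) • k)) :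
    ∀ t : ℝ, HasDerivAt γ
      (γ t * (Real.cos (β * t + φ) • p₁ + Real.sin (β * t + φ) • p₂)) t := by
  intro t
  have hγ_eq : γ = fun u : ℝ => exp (u • (Real.cos φ • p₁ + Real.sin φ • p₂ + β • k)) *
      exp (u • ((-β) • k)) := by
    funext u
    rw [hγ, smul_smul, mul_neg]
  have hderiv := hasDerivAt_iff_tendsto_slope.mpr (Matrix.tendsto_slope_exp_smul_mul_exp_smul
    (Real.cos φ • p₁ + Real.sin φ • p₂ + β • k) ((-β) • k) t)
  rw [← hγ_eq, smul_smul, mul_neg] at hderiv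
  have hcomm : Commute k (exp ((-(t * β)) • k)) := ((Commute.refl k).smul_right _).exp_right
  have hrot : (Real.cos φ • p₁ + Real.sin φ • p₂) * exp ((-(t * β)) • k) =
      exp ((-(t * β)) • k) * (Real.cos (β * t + φ) • p₁ + Real.sin (β * t + φ) • p₂) := by
    rw [hp₁, hp₂, hk, Matrix.exp_smul_skew_fin_two, Matrix.mul_rotation_fin_two,
      show φ - 2 * (-(t * β) / 2) = β * t + φ by ring]
  refine hderiv.congr_deriv ?_
  rw [hγ t, mul_assoc, add_mul, smul_mul_assoc, mul_smul_comm, hcomm.eq, hrot]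
  congr 1
  module
end

section
/- Let p₁ = !![1/2, 0; 0, −1/2], p₂ = !![0, 1/2; 1/2, 0], k = !![0, −1/2; 1/2, 0]. Fix β, φ, t ∈ ℝ with β² < 1, and set m = sinh(t√(1−β²)/2)/√(1−β²) and n = cosh(t√(1−β²)/2). Then exp(t·(cos(φ)·p₁ + sin(φ)·p₂ + β·k)) · exp(−t·β·k) equals the matrix with entries: (1,1) entry n·cos(βt/2) + m·(cos(βt/2 + φ) + β·sin(βt/2)); (1,2) entry n·sin(βt/2) + m·(sin(βt/2 + φ) − β·cos(βt/2)); (2,1) entry −n·sin(βt/2) + m·(sin(βt/2 + φ) + β·cos(βt/2)); (2,2) entry n·cos(βt/2) + m·(−cos(βt/2 + φ) + β·sin(βt/2)). -/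
set_option maxHeartbeats 1000000

open NormedSpace Real

open Nat in
lemma my_summable_aux (r : ℝ) (g : ℕ → ℕ) (hg : ∀ k, k ≤ g k) :
    Summable (fun k : ℕ => r ^ k / (g k)!) := by
  apply Summable.of_abs
  apply Summable.of_nonneg_of_le (fun k => abs_nonneg _) (fun k => ?_)
    (Real.summable_pow_div_factorial |r|)
  rw [abs_div, abs_pow, abs_of_nonneg (by positivity : (0:ℝ) ≤ ((g k)! : ℝ))]
  apply div_le_div_of_nonneg_left ?_ ?_ ?_
  · positivity
  · positivity
  · exact_mod_cast Nat.factorial_le (hg k)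

open Nat in
lemma exp_of_sq {𝔸 : Type*} [NormedRing 𝔸] [NormedAlgebra ℝ 𝔸] [CompleteSpace 𝔸]
    (x : 𝔸) (r : ℝ) (h : x * x = r • (1 : 𝔸)) :
    exp x = (∑' n : ℕ, r ^ n / (2 * n)!) • (1 : 𝔸)
      + (∑' n : ℕ, r ^ n / (2 * n + 1)!) • x := by
  have heven : ∀ n : ℕ, x ^ (2 * n) = r ^ n • (1 : 𝔸) := by
    intro n
    induction n with
    | zero => simp
    | succ k ih =>
      have h2 : 2 * (k + 1) = 2 * k + 2 := by ring
      rw [h2, pow_add, ih, pow_two, h, smul_mul_assoc, mul_smul_one, smul_smul, pow_succ]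
  have hodd : ∀ n : ℕ, x ^ (2 * n + 1) = r ^ n • x := by
    intro n
    rw [pow_add, heven, pow_one, smul_mul_assoc, one_mul]
  have hsum := NormedSpace.expSeries_summable' (𝕂 := ℝ) x
  have he : Summable fun k : ℕ => ((2 * k)! ⁻¹ : ℝ) • x ^ (2 * k) :=
    hsum.comp_injective (fun a b hab => by omega)
  have ho : Summable fun k : ℕ => ((2 * k + 1)! ⁻¹ : ℝ) • x ^ (2 * k + 1) :=
    hsum.comp_injective (fun a b hab => by omega)
  simp only [NormedSpace.exp_eq_tsum (𝕂 := ℝ)]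
  rw [← tsum_even_add_odd (f := fun n : ℕ => ((n)! ⁻¹ : ℝ) • x ^ n) he ho]
  congr 1
  · rw [← Summable.tsum_smul_const (my_summable_aux r (fun k => 2 * k) (fun k => by show k ≤ 2 * k; omega))]
    exact tsum_congr fun k => by rw [heven, smul_smul, div_eq_inv_mul]
  · rw [← Summable.tsum_smul_const (my_summable_aux r (fun k => 2 * k + 1)
      (fun k => by show k ≤ 2 * k + 1; omega))]
    exact tsum_congr fun k => by rw [hodd, smul_smul, div_eq_inv_mul]

open Nat in
lemma matrix_exp_of_sq (A : Matrix (Fin 2) (Fin 2) ℝ) (r : ℝ)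
    (h : A * A = r • (1 : Matrix (Fin 2) (Fin 2) ℝ)) :
    exp A = (∑' n : ℕ, r ^ n / (2 * n)!) • (1 : Matrix (Fin 2) (Fin 2) ℝ)
      + (∑' n : ℕ, r ^ n / (2 * n + 1)!) • A := by
  letI : NormedRing (Matrix (Fin 2) (Fin 2) ℝ) := Matrix.linftyOpNormedRing
  letI : NormedAlgebra ℝ (Matrix (Fin 2) (Fin 2) ℝ) := Matrix.linftyOpNormedAlgebra
  exact exp_of_sq A r h

theorem geodesic_formula_beta_sq_lt_one
    (p₁ p₂ k : Matrix (Fin 2) (Fin 2) ℝ)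
    (hp₁ : p₁ = !![1/2, 0; 0, -1/2])
    (hp₂ : p₂ = !![0, 1/2; 1/2, 0])
    (hk : k = !![0, -1/2; 1/2, 0])
    (β φ t : ℝ) (hβ : β ^ 2 < 1)
    (m n : ℝ)
    (hm : m = Real.sinh (t * Real.sqrt (1 - β ^ 2) / 2) / Real.sqrt (1 - β ^ 2))
    (hn : n = Real.cosh (t * Real.sqrt (1 - β ^ 2) / 2)) :
    exp (t • (Real.cos φ • p₁ + Real.sin φ • p₂ + β • k)) * exp ((-(t * β)) • k) =
      !![n * cos (β * t / 2) + m * (cos (β * t / 2 + φ) + β * sin (β * t / 2)),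
         n * sin (β * t / 2) + m * (sin (β * t / 2 + φ) - β * cos (β * t / 2));
         -n * sin (β * t / 2) + m * (sin (β * t / 2 + φ) + β * cos (β * t / 2)),
         n * cos (β * t / 2) + m * (-cos (β * t / 2 + φ) + β * sin (β * t / 2))] := by
  subst hp₁ hp₂ hk
  have hb : (0:ℝ) < 1 - β ^ 2 := by linarith
  have hs : (0:ℝ) < Real.sqrt (1 - β ^ 2) := Real.sqrt_pos.mpr hb
  set θ : ℝ := t * Real.sqrt (1 - β ^ 2) / 2 with hθ
  set w : ℝ := β * t / 2 with hw
  -- the first matrix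
  have hA1 : t • (Real.cos φ • !![1/2, 0; 0, -1/2] + Real.sin φ • !![0, 1/2; 1/2, 0]
      + β • !![0, -1/2; 1/2, 0])
      = !![t * Real.cos φ / 2, t * (Real.sin φ - β) / 2;
          t * (Real.sin φ + β) / 2, -(t * Real.cos φ) / 2] := by
    ext i j
    fin_cases i <;> fin_cases j <;> simp <;> ring
  have hA2 : (-(t * β)) • !![0, -1/2; 1/2, 0] = !![0, w; -w, 0] := by
    ext i j
    fin_cases i <;> fin_cases j <;> simp [hw] <;> ring
  -- squares
  have hθ2 : θ ^ 2 = t ^ 2 * (1 - β ^ 2) / 4 := by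
    rw [hθ, div_pow, mul_pow, Real.sq_sqrt hb.le]; ring
  have hsq1 : (!![t * Real.cos φ / 2, t * (Real.sin φ - β) / 2;
          t * (Real.sin φ + β) / 2, -(t * Real.cos φ) / 2] :
        Matrix (Fin 2) (Fin 2) ℝ) * !![t * Real.cos φ / 2, t * (Real.sin φ - β) / 2;
          t * (Real.sin φ + β) / 2, -(t * Real.cos φ) / 2] = (θ ^ 2) • (1 : Matrix (Fin 2) (Fin 2) ℝ) := by
    ext i j
    fin_cases i <;> fin_cases j <;>
      simp [Matrix.mul_apply, Fin.sum_univ_two, Matrix.one_apply, hθ2] <;>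
      nlinarith [Real.sin_sq_add_cos_sq φ]
  have hsq2 : (!![0, w; -w, 0] : Matrix (Fin 2) (Fin 2) ℝ) * !![0, w; -w, 0]
      = (-(w ^ 2)) • (1 : Matrix (Fin 2) (Fin 2) ℝ) := by
    ext i j
    fin_cases i <;> fin_cases j <;>
      simp [Matrix.mul_apply, Fin.sum_univ_two, Matrix.one_apply] <;> ring
  have e1 := matrix_exp_of_sq _ _ hsq1
  have e2 := matrix_exp_of_sq _ _ hsq2
  -- identify the sums
  have hN : (∑' j : ℕ, (θ ^ 2) ^ j / (Nat.factorial (2 * j))) = n := by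
    rw [hn, Real.cosh_eq_tsum]
    exact tsum_congr fun j => by rw [pow_mul]
  have hMθ : (∑' j : ℕ, (θ ^ 2) ^ j / (Nat.factorial (2 * j + 1))) * θ = Real.sinh θ := by
    rw [Real.sinh_eq_tsum, ← tsum_mul_right]
    exact tsum_congr fun j => by rw [pow_succ θ (2 * j), pow_mul θ 2 j]; ring
  have hM : (∑' j : ℕ, (θ ^ 2) ^ j / (Nat.factorial (2 * j + 1))) * (t / 2) = m := by
    rw [hm, ← hMθ, hθ]
    field_simp
  have hC : (∑' j : ℕ, (-(w ^ 2)) ^ j / (Nat.factorial (2 * j))) = Real.cos w := by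
    rw [Real.cos_eq_tsum]
    exact tsum_congr fun j => by rw [neg_pow, pow_mul, mul_div_assoc]
  have hS : (∑' j : ℕ, (-(w ^ 2)) ^ j / (Nat.factorial (2 * j + 1))) * w = Real.sin w := by
    rw [Real.sin_eq_tsum, ← tsum_mul_right]
    exact tsum_congr fun j => by
      rw [pow_succ w (2 * j), pow_mul w 2 j, neg_pow]; ring
  rw [hA1, hA2, e1, e2]
  set C := ∑' j : ℕ, (θ ^ 2) ^ j / (Nat.factorial (2 * j))
  set S := ∑' j : ℕ, (θ ^ 2) ^ j / (Nat.factorial (2 * j + 1))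
  set C' := ∑' j : ℕ, (-(w ^ 2)) ^ j / (Nat.factorial (2 * j))
  set S' := ∑' j : ℕ, (-(w ^ 2)) ^ j / (Nat.factorial (2 * j + 1))
  ext i j
  fin_cases i <;> fin_cases j <;>
    simp [Matrix.mul_apply, Fin.sum_univ_two, Matrix.one_apply, Real.cos_add, Real.sin_add] <;>
    (rw [← hN, ← hM, ← hC, ← hS]; ring)
end

section
/- Let p₁ = !![1/2, 0; 0, −1/2], p₂ = !![0, 1/2; 1/2, 0], k = !![0, −1/2; 1/2, 0]. Fix β, φ, t ∈ ℝ with β² > 1, and set m = sin(t√(β²−1)/2)/√(β²−1) and n = cos(t√(β²−1)/2). Then exp(t·(cos(φ)·p₁ + sin(φ)·p₂ + β·k)) · exp(−t·β·k) equals the matrix with entries: (1,1) entry n·cos(βt/2) + m·(cos(βt/2 + φ) + β·sin(βt/2)); (1,2) entry n·sin(βt/2) + m·(sin(βt/2 + φ) − β·cos(βt/2)); (2,1) entry −n·sin(βt/2) + m·(sin(βt/2 + φ) + β·cos(βt/2)); (2,2) entry n·cos(βt/2) + m·(−cos(βt/2 + φ) + β·sin(βt/2)). -/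
open NormedSpace Real

noncomputable def cMat : ℂ →+* Matrix (Fin 2) (Fin 2) ℝ where
  toFun z := !![z.re, -z.im; z.im, z.re]
  map_one' := by rw [Matrix.one_fin_two]; norm_num
  map_zero' := by ext i j; fin_cases i <;> fin_cases j <;> simp
  map_mul' z w := by
    ext i j
    fin_cases i <;> fin_cases j <;>
      simp [Matrix.mul_apply, Fin.sum_univ_two, Complex.mul_re, Complex.mul_im] <;> ring
  map_add' z w := by
    ext i j
    fin_cases i <;> fin_cases j <;> simp [Complex.add_re, Complex.add_im] <;> ring

lemma cMat_cont : Continuous cMat := by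
  show Continuous fun z : ℂ => !![z.re, -z.im; z.im, z.re]
  apply continuous_matrix
  intro i j
  fin_cases i <;> fin_cases j <;> simp <;> fun_prop

lemma exp_rot (θ : ℝ) :
    NormedSpace.exp (θ • (!![0, -1; 1, 0] : Matrix (Fin 2) (Fin 2) ℝ)) =
      !![Real.cos θ, -Real.sin θ; Real.sin θ, Real.cos θ] := by
  have h1 : θ • (!![0, -1; 1, 0] : Matrix (Fin 2) (Fin 2) ℝ) = cMat (θ * Complex.I) := by
    show _ = !![(θ * Complex.I).re, -(θ * Complex.I).im; (θ * Complex.I).im, (θ * Complex.I).re]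
    ext i j; fin_cases i <;> fin_cases j <;> simp
  letI : SeminormedRing (Matrix (Fin 2) (Fin 2) ℝ) := Matrix.linftyOpSemiNormedRing
  letI : NormedRing (Matrix (Fin 2) (Fin 2) ℝ) := Matrix.linftyOpNormedRing
  letI : NormedAlgebra ℝ (Matrix (Fin 2) (Fin 2) ℝ) := Matrix.linftyOpNormedAlgebra
  rw [h1]
  erw [← map_exp cMat cMat_cont]
  rw [← Complex.exp_eq_exp_ℂ,
    Complex.exp_mul_I]
  show !![_, _; _, _] = _
  ext i j
  fin_cases i <;> fin_cases j <;>
    simp [Complex.add_re, Complex.add_im, Complex.cos_ofReal_re, Complex.sin_ofReal_re]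

theorem geodesic_formula_beta_sq_gt_one
    (p₁ p₂ k : Matrix (Fin 2) (Fin 2) ℝ)
    (hp₁ : p₁ = !![1/2, 0; 0, -1/2])
    (hp₂ : p₂ = !![0, 1/2; 1/2, 0])
    (hk : k = !![0, -1/2; 1/2, 0])
    (β φ t : ℝ) (hβ : 1 < β ^ 2)
    (m n : ℝ)
    (hm : m = Real.sin (t * Real.sqrt (β ^ 2 - 1) / 2) / Real.sqrt (β ^ 2 - 1))
    (hn : n = Real.cos (t * Real.sqrt (β ^ 2 - 1) / 2)) :
    NormedSpace.exp (t • (Real.cos φ • p₁ + Real.sin φ • p₂ + β • k)) * NormedSpace.exp ((-(t * β)) • k) =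
      !![n * cos (β * t / 2) + m * (cos (β * t / 2 + φ) + β * sin (β * t / 2)),
         n * sin (β * t / 2) + m * (sin (β * t / 2 + φ) - β * cos (β * t / 2));
         -n * sin (β * t / 2) + m * (sin (β * t / 2 + φ) + β * cos (β * t / 2)),
         n * cos (β * t / 2) + m * (-cos (β * t / 2 + φ) + β * sin (β * t / 2))] := by
  subst hp₁ hp₂ hk
  obtain ⟨s, hs_def⟩ : ∃ x, Real.sqrt (β ^ 2 - 1) = x := ⟨_, rfl⟩
  rw [hs_def] at hm hn
  have hs2 : s ^ 2 = β ^ 2 - 1 := by rw [← hs_def]; exact Real.sq_sqrt (by linarith)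
  have hs0 : 0 < s := by rw [← hs_def]; exact Real.sqrt_pos.2 (by linarith)
  have hsb : Real.sin φ + β ≠ 0 := by
    rcases le_or_gt 0 β with h0 | h0
    · have h1 : 1 < β := by nlinarith
      nlinarith [Real.neg_one_le_sin φ]
    · have h1 : β < -1 := by nlinarith
      nlinarith [Real.sin_le_one φ]
  obtain ⟨θ, hθ⟩ : ∃ x, t * s / 2 = x := ⟨_, rfl⟩
  rw [hθ] at hm hn
  set P : Matrix (Fin 2) (Fin 2) ℝ := !![s, Real.cos φ; 0, Real.sin φ + β] with hP_def
  have hdet : IsUnit P.det := by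
    rw [hP_def, Matrix.det_fin_two_of]
    exact isUnit_iff_ne_zero.2 (by simpa using mul_ne_zero hs0.ne' hsb)
  have hPunit : IsUnit P := (Matrix.isUnit_iff_isUnit_det P).2 hdet
  set J : Matrix (Fin 2) (Fin 2) ℝ := !![0, -1; 1, 0] with hJ_def
  have hm' : m * s = Real.sin θ := by
    rw [hm]; field_simp
  have hn' : n = Real.cos θ := hn
  have e1 : t * Real.cos φ ^ 2 * (1 / 2) + t * Real.sin φ ^ 2 * (1 / 2) + t * β ^ 2 * (-1 / 2)
      = t * s ^ 2 * (-1 / 2) := by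
    linear_combination (t / 2) * (Real.sin_sq_add_cos_sq φ) + (t / 2) * hs2
  have hAP : (t • (Real.cos φ • !![1/2, 0; 0, -1/2] + Real.sin φ • !![0, 1/2; 1/2, 0]
      + β • !![0, -1/2; 1/2, 0])) * P = P * (θ • J) := by
    ext i j
    fin_cases i <;> fin_cases j
    all_goals simp [hP_def, hJ_def, ← hθ, Matrix.mul_apply, Fin.sum_univ_two, Matrix.smul_apply]
    all_goals first
      | exact e1
      | linarith [e1]
      | ring
  have hA : t • (Real.cos φ • !![1/2, 0; 0, -1/2] + Real.sin φ • !![0, 1/2; 1/2, 0]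
      + β • !![0, -1/2; 1/2, 0]) = P * (θ • J) * P⁻¹ := by
    rw [← hAP, Matrix.mul_nonsing_inv_cancel_right _ _ hdet]
  set E : Matrix (Fin 2) (Fin 2) ℝ :=
    !![n + m * Real.cos φ, m * (Real.sin φ - β);
       m * (Real.sin φ + β), n - m * Real.cos φ] with hE_def
  have f1 : Real.cos θ * s + m * Real.cos φ * s = Real.cos θ * s + Real.cos φ * Real.sin θ := by
    linear_combination Real.cos φ * hm'
  have f2 : Real.cos θ * Real.cos φ + m * Real.cos φ ^ 2 + (m * Real.sin φ ^ 2 - m * β ^ 2)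
      = Real.cos θ * Real.cos φ - s * Real.sin θ := by
    linear_combination m * (Real.sin_sq_add_cos_sq φ) + m * hs2 - s * hm'
  have f3 : m * Real.sin φ * s + m * β * s = Real.sin φ * Real.sin θ + β * Real.sin θ := by
    linear_combination (Real.sin φ + β) * hm'
  have hEP : E * P = P * !![Real.cos θ, -Real.sin θ; Real.sin θ, Real.cos θ] := by
    ext i j
    fin_cases i <;> fin_cases j
    all_goals simp [hP_def, hE_def, Matrix.mul_apply, Fin.sum_univ_two, hn']
    all_goals first
      | exact f1
      | exact f2
      | exact f3
      | linarith [f1]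
      | linarith [f2]
      | linarith [f3]
      | ring
  have hE' : E = P * !![Real.cos θ, -Real.sin θ; Real.sin θ, Real.cos θ] * P⁻¹ := by
    rw [← hEP, Matrix.mul_nonsing_inv_cancel_right _ _ hdet]
  have hexpA : NormedSpace.exp (t • (Real.cos φ • !![1/2, 0; 0, -1/2] + Real.sin φ • !![0, 1/2; 1/2, 0]
      + β • !![0, -1/2; 1/2, 0])) = E := by
    rw [hA, Matrix.exp_conj P (θ • J) hPunit, exp_rot, ← hE']
  have hk2 : (-(t * β)) • (!![0, -1/2; 1/2, 0] : Matrix (Fin 2) (Fin 2) ℝ)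
      = (-(β * t / 2)) • J := by
    ext i j
    fin_cases i <;> fin_cases j <;> simp [hJ_def] <;> ring
  have hexpK : NormedSpace.exp ((-(t * β)) • (!![(0:ℝ), -1/2; 1/2, 0] : Matrix (Fin 2) (Fin 2) ℝ)) =
      !![Real.cos (β * t / 2), Real.sin (β * t / 2);
         -Real.sin (β * t / 2), Real.cos (β * t / 2)] := by
    rw [hk2, exp_rot]
    ext i j
    fin_cases i <;> fin_cases j <;> simp
  rw [hexpA, hexpK]
  ext i j
  fin_cases i <;> fin_cases j <;>
      simp [hE_def, Matrix.mul_apply, Fin.sum_univ_two, Real.cos_add, Real.sin_add] <;>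
      ring
end

section
/- Let c = (cᵢⱼ) be a real 2×2 symmetric matrix (cᵀ = c) with det c = 1, trace(c) > 0 and c ≠ 1, and define m(c) = (1/2)·√((c₁₁ − c₂₂)² + (c₁₂ + c₂₁)²). Then there exist real numbers a > 0 and b such that cosh a = trace(c)/2, sinh a = m(c), cos(2b) = (c₁₁ − c₂₂)/(2·m(c)), sin(2b) = c₁₂/m(c), and c = R(b) · !![eᵃ, 0; 0, e⁻ᵃ] · R(b)ᵀ, where R(b) = !![cos b, −sin b; sin b, cos b]. Conversely, every matrix of the form R(b) · !![eᵃ, 0; 0, e⁻ᵃ] · R(b)ᵀ with a > 0 is symmetric, has determinant 1, positive trace, and is not the identity. -/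
/-!
Conjugating `diag(eᵃ, e⁻ᵃ)` by `R(b)` gives `cosh a • 1 + sinh a • !![cos 2b, sin 2b; sin 2b, -cos 2b]`,
which is symmetric with determinant `cosh² a - sinh² a = 1` and trace `2 cosh a > 2`.
Conversely, a symmetric `c` is `(tr c / 2) • 1` plus a traceless symmetric part encoded by the
complex number `(c₁₁ - c₂₂) + (c₁₂ + c₂₁) i` of modulus `2 m(c)`, and `det c = (tr c / 2)² - m(c)²`.
So `a = arsinh m(c)` and `2b` is the argument of that complex number; `m(c) = 0` forces `c = 1`.
-/

open Real Matrix

noncomputable def mInv (c : Matrix (Fin 2) (Fin 2) ℝ) : ℝ :=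
  Real.sqrt ((c 0 0 - c 1 1) ^ 2 + (c 0 1 + c 1 0) ^ 2) / 2

noncomputable def rot (b : ℝ) : Matrix (Fin 2) (Fin 2) ℝ :=
  !![cos b, -sin b; sin b, cos b]

section rotConj

variable (a b : ℝ)

lemma rot_conj_eq :
    rot b * !![exp a, 0; 0, exp (-a)] * (rot b)ᵀ =
      !![cosh a + sinh a * cos (2 * b), sinh a * sin (2 * b);
        sinh a * sin (2 * b), cosh a - sinh a * cos (2 * b)] := by
  have hb := sin_sq_add_cos_sq b
  have hRt : (rot b)ᵀ = !![cos b, sin b; -sin b, cos b] := by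
    ext i j; fin_cases i <;> fin_cases j <;> rfl
  rw [hRt, rot, mul_fin_two, mul_fin_two, cosh_eq, sinh_eq, cos_two_mul, sin_two_mul]
  ext i j
  fin_cases i <;> fin_cases j <;>
    simp only [mul_zero, add_zero, zero_add, neg_mul, mul_neg, Fin.zero_eta, Fin.mk_one,
      Fin.isValue, of_apply, cons_val', cons_val_zero, cons_val_one, cons_val_fin_one]
  · linear_combination exp (-a) * hb
  · ring
  · ring
  · linear_combination exp a * hb

lemma transpose_rot_conj :
    (rot b * !![exp a, 0; 0, exp (-a)] * (rot b)ᵀ)ᵀ =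
      rot b * !![exp a, 0; 0, exp (-a)] * (rot b)ᵀ := by
  rw [rot_conj_eq]
  ext i j; fin_cases i <;> fin_cases j <;> rfl

lemma det_rot_conj : (rot b * !![exp a, 0; 0, exp (-a)] * (rot b)ᵀ).det = 1 := by
  rw [rot_conj_eq, det_fin_two_of]
  linear_combination cosh_sq a - sinh a ^ 2 * sin_sq_add_cos_sq (2 * b)

lemma trace_rot_conj : (rot b * !![exp a, 0; 0, exp (-a)] * (rot b)ᵀ).trace = 2 * cosh a := by
  rw [rot_conj_eq, trace_fin_two_of]
  ring

lemma rot_conj_ne_one (ha : a ≠ 0) : rot b * !![exp a, 0; 0, exp (-a)] * (rot b)ᵀ ≠ 1 := by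
  intro h
  have htr := congrArg trace h
  rw [trace_rot_conj, trace_one, Fintype.card_fin] at htr
  exact (one_lt_cosh.mpr ha).ne' (by norm_num at htr; linarith)

end rotConj

def deviatorCoord (c : Matrix (Fin 2) (Fin 2) ℝ) : ℂ := ⟨c 0 0 - c 1 1, c 0 1 + c 1 0⟩

section symmetric

variable {c : Matrix (Fin 2) (Fin 2) ℝ}

lemma apply_one_zero_of_transpose_eq (hc : cᵀ = c) : c 1 0 = c 0 1 :=
  congrFun (congrFun hc 0) 1

lemma mInv_sq_of_transpose_eq (hc : cᵀ = c) : mInv c ^ 2 = (c.trace / 2) ^ 2 - c.det := by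
  rw [mInv, div_pow, sq_sqrt (by positivity), trace_fin_two, det_fin_two,
    apply_one_zero_of_transpose_eq hc]
  ring

lemma eq_one_of_mInv_eq_zero (hc : cᵀ = c) (hdet : c.det = 1) (htr : 0 < c.trace)
    (hm : mInv c = 0) : c = 1 := by
  have h10 := apply_one_zero_of_transpose_eq hc
  have hsq := mInv_sq_of_transpose_eq hc
  rw [hm, trace_fin_two, det_fin_two, h10] at hsq
  rw [trace_fin_two] at htr
  rw [det_fin_two, h10] at hdet
  have h11 : c 1 1 = c 0 0 := by nlinarith [sq_nonneg (c 0 0 - c 1 1), sq_nonneg (c 0 1)]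
  have h01 : c 0 1 = 0 := by nlinarith [sq_nonneg (c 0 0 - c 1 1), sq_nonneg (c 0 1)]
  have h00 : c 0 0 = 1 := by nlinarith
  ext i j
  fin_cases i <;> fin_cases j <;> simp [h00, h01, h10, h11]

lemma mInv_pos (hc : cᵀ = c) (hdet : c.det = 1) (htr : 0 < c.trace) (hne : c ≠ 1) :
    0 < mInv c :=
  lt_of_le_of_ne (by unfold mInv; positivity)
    (Ne.symm fun hm => hne (eq_one_of_mInv_eq_zero hc hdet htr hm))

lemma cosh_arsinh_mInv (hc : cᵀ = c) (hdet : c.det = 1) (htr : 0 < c.trace) :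
    cosh (arsinh (mInv c)) = c.trace / 2 := by
  rw [cosh_arsinh, mInv_sq_of_transpose_eq hc, hdet, add_sub_cancel, sqrt_sq (by positivity)]

lemma norm_deviatorCoord : ‖deviatorCoord c‖ = 2 * mInv c := by
  rw [Complex.norm_eq_sqrt_sq_add_sq, mInv, mul_div_cancel₀ _ two_ne_zero]
  rfl

lemma cos_arg_deviatorCoord (hm : 0 < mInv c) :
    cos (deviatorCoord c).arg = (c 0 0 - c 1 1) / (2 * mInv c) := by
  have hz : deviatorCoord c ≠ 0 := norm_pos_iff.mp (norm_deviatorCoord (c := c) ▸ by positivity)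
  rw [Complex.cos_arg hz, norm_deviatorCoord]
  rfl

lemma sin_arg_deviatorCoord (hc : cᵀ = c) (hm : 0 < mInv c) :
    sin (deviatorCoord c).arg = c 0 1 / mInv c := by
  rw [Complex.sin_arg, norm_deviatorCoord]
  change (c 0 1 + c 1 0) / _ = _
  rw [apply_one_zero_of_transpose_eq hc]
  field_simp
  ring

lemma eq_rot_conj_of_transpose_eq {a b : ℝ} (hc : cᵀ = c) (hm : 0 < mInv c)
    (hcosh : cosh a = c.trace / 2) (hsinh : sinh a = mInv c)
    (hcos : cos (2 * b) = (c 0 0 - c 1 1) / (2 * mInv c)) (hsin : sin (2 * b) = c 0 1 / mInv c) :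
    c = rot b * !![exp a, 0; 0, exp (-a)] * (rot b)ᵀ := by
  rw [rot_conj_eq, hcosh, hsinh, hcos, hsin, trace_fin_two]
  ext i j
  fin_cases i <;> fin_cases j <;>
    simp only [Fin.zero_eta, Fin.mk_one, Fin.isValue, apply_one_zero_of_transpose_eq hc, of_apply,
      cons_val', cons_val_zero, cons_val_one, cons_val_fin_one] <;>
    field_simp <;> ring

end symmetric

theorem symmetric_det_one_pos_trace_decomposition :
    (∀ c : Matrix (Fin 2) (Fin 2) ℝ, cᵀ = c → c.det = 1 → 0 < c.trace → c ≠ 1 →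
      ∃ a b : ℝ, 0 < a ∧
        Real.cosh a = c.trace / 2 ∧
        Real.sinh a = mInv c ∧
        Real.cos (2 * b) = (c 0 0 - c 1 1) / (2 * mInv c) ∧
        Real.sin (2 * b) = c 0 1 / mInv c ∧
        c = rot b * !![Real.exp a, 0; 0, Real.exp (-a)] * (rot b)ᵀ) ∧
    (∀ a b : ℝ, 0 < a →
      (rot b * !![Real.exp a, 0; 0, Real.exp (-a)] * (rot b)ᵀ)ᵀ =
        rot b * !![Real.exp a, 0; 0, Real.exp (-a)] * (rot b)ᵀ ∧
      (rot b * !![Real.exp a, 0; 0, Real.exp (-a)] * (rot b)ᵀ).det = 1 ∧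
      0 < (rot b * !![Real.exp a, 0; 0, Real.exp (-a)] * (rot b)ᵀ).trace ∧
      rot b * !![Real.exp a, 0; 0, Real.exp (-a)] * (rot b)ᵀ ≠ 1) := by
  refine ⟨fun c hc hdet htr hne => ?_, fun a b ha => ?_⟩
  · have hm := mInv_pos hc hdet htr hne
    have hcosh := cosh_arsinh_mInv hc hdet htr
    have h2b : 2 * ((deviatorCoord c).arg / 2) = (deviatorCoord c).arg := by ring
    have hcos := h2b ▸ cos_arg_deviatorCoord hm
    have hsin := h2b ▸ sin_arg_deviatorCoord hc hm
    exact ⟨_, _, arsinh_pos_iff.mpr hm, hcosh, sinh_arsinh _, hcos, hsin,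
      eq_rot_conj_of_transpose_eq hc hm hcosh (sinh_arsinh _) hcos hsin⟩
  · refine ⟨transpose_rot_conj a b, det_rot_conj a b, ?_, rot_conj_ne_one a b ha.ne'⟩
    rw [trace_rot_conj]
    positivity
end

section
/- The image of the set of real 2×2 symmetric traceless matrices under the matrix exponential equals the set of real 2×2 symmetric matrices of determinant 1 with positive trace; that is, {exp(x) : x real 2×2 matrix, xᵀ = x, trace x = 0} = {c real 2×2 matrix : cᵀ = c, det c = 1, trace c > 0}. -/
/-!
Every symmetric traceless real 2×2 matrix is `r • R θ` for the reflection
`R θ = !![cos θ, sin θ; sin θ, -cos θ]` (polar coordinates of its first row), and `R θ * R θ = 1`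
splits the exponential series into `exp (r • R θ) = cosh r • 1 + sinh r • R θ`. Conversely a
symmetric `c` with trace `2 s` is `s • 1 + w • R θ`, of determinant `s ^ 2 - w ^ 2`; so
`det c = 1` and `s > 0` say exactly that `(s, w) = (cosh r, sinh r)` with `r = arsinh w`.
-/

open Matrix NormedSpace

theorem NormedSpace.exp_smul_of_mul_self_eq_one {A : Type*} [Ring A] [Algebra ℝ A]
    [TopologicalSpace A] [IsTopologicalRing A] [ContinuousSMul ℝ A] [T2Space A]
    {u : A} (hu : u * u = 1) (t : ℝ) :
    exp (t • u) = Real.cosh t • (1 : A) + Real.sinh t • u := by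
  have hpow_even (n : ℕ) : (t • u) ^ (2 * n) = t ^ (2 * n) • (1 : A) := by
    rw [smul_pow, pow_mul u, sq u, hu, one_pow]
  rw [exp_eq_tsum ℝ]
  refine HasSum.tsum_eq (HasSum.even_add_odd ?_ ?_)
  · convert (Real.hasSum_cosh t).smul_const (1 : A) using 2 with n
    rw [hpow_even, smul_smul, div_eq_inv_mul]
  · convert (Real.hasSum_sinh t).smul_const u using 2 with n
    rw [pow_succ, hpow_even, smul_mul_smul, one_mul, smul_smul, ← pow_succ, div_eq_inv_mul]

open Real

noncomputable def reflectionMatrix (θ : ℝ) : Matrix (Fin 2) (Fin 2) ℝ :=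
  !![cos θ, sin θ; sin θ, -cos θ]

theorem reflectionMatrix_mul_self (θ : ℝ) : reflectionMatrix θ * reflectionMatrix θ = 1 := by
  rw [reflectionMatrix, mul_fin_two, one_fin_two]
  simp only [mul_neg, neg_mul, neg_neg, EmbeddingLike.apply_eq_iff_eq, vecCons_inj, and_true]
  have h := cos_sq_add_sin_sq θ
  exact ⟨⟨by linear_combination h, by ring⟩, by ring, by linear_combination h⟩

theorem transpose_reflectionMatrix (θ : ℝ) : (reflectionMatrix θ)ᵀ = reflectionMatrix θ := by
  simp [reflectionMatrix, ← Matrix.ext_iff, Fin.forall_fin_two]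

theorem trace_reflectionMatrix (θ : ℝ) : (reflectionMatrix θ).trace = 0 := by
  simp [reflectionMatrix, trace_fin_two]

theorem smul_one_add_smul_reflectionMatrix (s t θ : ℝ) :
    s • 1 + t • reflectionMatrix θ = !![s + t * cos θ, t * sin θ; t * sin θ, s - t * cos θ] := by
  ext i j
  fin_cases i <;> fin_cases j <;> simp [reflectionMatrix, sub_eq_add_neg]

theorem det_smul_one_add_smul_reflectionMatrix (s t θ : ℝ) :
    (s • 1 + t • reflectionMatrix θ).det = s ^ 2 - t ^ 2 := by
  rw [smul_one_add_smul_reflectionMatrix, det_fin_two_of]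
  linear_combination -t ^ 2 * sin_sq_add_cos_sq θ

theorem trace_smul_one_add_smul_reflectionMatrix (s t θ : ℝ) :
    (s • 1 + t • reflectionMatrix θ).trace = 2 * s := by
  rw [smul_one_add_smul_reflectionMatrix, trace_fin_two_of]
  ring

theorem exists_smul_reflectionMatrix_iff (x : Matrix (Fin 2) (Fin 2) ℝ) :
    (∃ r θ : ℝ, x = r • reflectionMatrix θ) ↔ xᵀ = x ∧ x.trace = 0 := by
  constructor
  · rintro ⟨r, θ, rfl⟩
    simp [transpose_reflectionMatrix, trace_reflectionMatrix]
  · rintro ⟨hsymm, htrace⟩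
    set z : ℂ := ⟨x 0 0, x 0 1⟩
    refine ⟨‖z‖, z.arg, ?_⟩
    rw [eta_fin_two x, reflectionMatrix]
    have h10 : x 1 0 = x 0 1 := by simpa using congrFun₂ hsymm 0 1
    have h11 : x 1 1 = -x 0 0 := by rw [trace_fin_two] at htrace; linarith
    simpa [z] using ⟨h10, h11⟩

theorem exists_cosh_smul_one_add_sinh_smul_reflectionMatrix_iff (c : Matrix (Fin 2) (Fin 2) ℝ) :
    (∃ r θ : ℝ, c = cosh r • 1 + sinh r • reflectionMatrix θ) ↔
      cᵀ = c ∧ c.det = 1 ∧ 0 < c.trace := by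
  constructor
  · rintro ⟨r, θ, rfl⟩
    refine ⟨?_, ?_, ?_⟩
    · simp [transpose_reflectionMatrix]
    · rw [det_smul_one_add_smul_reflectionMatrix, cosh_sq_sub_sinh_sq]
    · rw [trace_smul_one_add_smul_reflectionMatrix]
      positivity
  · rintro ⟨hsymm, hdet, htrace⟩
    set s := c.trace / 2
    obtain ⟨w, θ, hw⟩ := (exists_smul_reflectionMatrix_iff (c - s • 1)).2
      ⟨by simp [hsymm], by simp [s]⟩
    have hc : c = s • 1 + w • reflectionMatrix θ := by rw [← hw]; abel
    have hs : s = √(1 + w ^ 2) := by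
      rw [hc, det_smul_one_add_smul_reflectionMatrix] at hdet
      rw [show 1 + w ^ 2 = s ^ 2 by linarith, sqrt_sq (by positivity)]
    exact ⟨arsinh w, θ, by rw [cosh_arsinh, sinh_arsinh, ← hs, hc]⟩

theorem exp_image_symmetric_traceless :
    NormedSpace.exp '' {x : Matrix (Fin 2) (Fin 2) ℝ | xᵀ = x ∧ x.trace = 0} =
      {c : Matrix (Fin 2) (Fin 2) ℝ | cᵀ = c ∧ c.det = 1 ∧ 0 < c.trace} := by
  ext c
  simp only [Set.mem_image, Set.mem_ofPred_eq, ← exists_smul_reflectionMatrix_iff,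
    ← exists_cosh_smul_one_add_sinh_smul_reflectionMatrix_iff]
  have hexp (r θ : ℝ) := exp_smul_of_mul_self_eq_one (reflectionMatrix_mul_self θ) r
  constructor
  · rintro ⟨_, ⟨r, θ, rfl⟩, rfl⟩
    exact ⟨r, θ, hexp r θ⟩
  · rintro ⟨r, θ, rfl⟩
    exact ⟨r • reflectionMatrix θ, ⟨r, θ, rfl⟩, hexp r θ⟩
end

section
/- Let p₁ = !![1/2, 0; 0, −1/2], p₂ = !![0, 1/2; 1/2, 0], k = !![0, −1/2; 1/2, 0]. Fix β ∈ ℝ with β² > 1 and set T = 2π/√(β²−1). Then for every φ ∈ ℝ, exp(T·(cos(φ)·p₁ + sin(φ)·p₂ + β·k)) · exp(−T·β·k) = !![−cos(πβ/√(β²−1)), −sin(πβ/√(β²−1)); sin(πβ/√(β²−1)), −cos(πβ/√(β²−1))]; in particular the value does not depend on φ. -/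
open Real NormedSpace

section Aux

attribute [local instance] Matrix.linftyOpNormedRing Matrix.linftyOpNormedAlgebra

lemma exp_smul_of_sq_eq_neg_one (j : Matrix (Fin 2) (Fin 2) ℝ) (hj : j * j = -1) (t : ℝ) :
    exp (t • j) = Real.cos t • (1 : Matrix (Fin 2) (Fin 2) ℝ) + Real.sin t • j := by
  let f : ℂ →ₐ[ℝ] Matrix (Fin 2) (Fin 2) ℝ := Complex.lift ⟨j, hj⟩
  have hf : Continuous f := f.toLinearMap.continuous_of_finiteDimensional
  have happ : ∀ z : ℂ, f z = z.re • (1 : Matrix (Fin 2) (Fin 2) ℝ) + z.im • j := by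
    intro z
    show Complex.liftAux j hj z = _
    rw [Complex.liftAux_apply, Algebra.algebraMap_eq_smul_one]
  have h1 : t • j = f ((t : ℂ) * Complex.I) := by
    rw [happ]
    simp
  rw [h1]; erw [← map_exp f hf]
  have h2 : exp ((t : ℂ) * Complex.I) = Complex.exp ((t : ℂ) * Complex.I) := by
    rw [Complex.exp_eq_exp_ℂ]
  rw [h2, happ, Complex.exp_ofReal_mul_I_re, Complex.exp_ofReal_mul_I_im]

end Aux

theorem geodesic_at_conjugate_time
    (p₁ p₂ k : Matrix (Fin 2) (Fin 2) ℝ)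
    (hp₁ : p₁ = !![1/2, 0; 0, -1/2])
    (hp₂ : p₂ = !![0, 1/2; 1/2, 0])
    (hk : k = !![0, -1/2; 1/2, 0])
    (β : ℝ) (hβ : 1 < β ^ 2)
    (T : ℝ) (hT : T = 2 * π / Real.sqrt (β ^ 2 - 1)) :
    ∀ φ : ℝ,
      exp (T • (cos φ • p₁ + sin φ • p₂ + β • k)) * exp ((-(T * β)) • k) =
        !![-cos (π * β / Real.sqrt (β ^ 2 - 1)), -sin (π * β / Real.sqrt (β ^ 2 - 1));
           sin (π * β / Real.sqrt (β ^ 2 - 1)), -cos (π * β / Real.sqrt (β ^ 2 - 1))] := by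
  intro φ
  set ω := Real.sqrt (β ^ 2 - 1) with hω
  have hβ1 : (0:ℝ) < β ^ 2 - 1 := by linarith
  have hω0 : 0 < ω := Real.sqrt_pos.mpr hβ1
  have hω2 : ω ^ 2 = β ^ 2 - 1 := Real.sq_sqrt hβ1.le
  set A : Matrix (Fin 2) (Fin 2) ℝ := cos φ • p₁ + sin φ • p₂ + β • k with hA
  -- j₁ = (2/ω) • A squares to -1
  have hAA : A * A = (-(ω^2/4)) • (1 : Matrix (Fin 2) (Fin 2) ℝ) := by
    have hcs : cos φ ^ 2 + sin φ ^ 2 = 1 := by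
      rw [← Real.sin_sq_add_cos_sq φ]; ring
    subst hp₁ hp₂ hk
    rw [hA]
    ext i l
    fin_cases i <;> fin_cases l <;>
      simp [Matrix.mul_apply, Fin.sum_univ_succ, Matrix.one_apply, hω2] <;> nlinarith [hcs]
  have hj₁ : ((2/ω) • A) * ((2/ω) • A) = (-1 : Matrix (Fin 2) (Fin 2) ℝ) := by
    rw [smul_mul_smul_comm, hAA, smul_smul]
    rw [show (2/ω) * (2/ω) * (-(ω^2/4)) = -1 by field_simp; ring, neg_one_smul]
  have hj₂ : ((2:ℝ) • k) * ((2:ℝ) • k) = (-1 : Matrix (Fin 2) (Fin 2) ℝ) := by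
    subst hk
    rw [smul_mul_smul_comm]
    ext i l
    fin_cases i <;> fin_cases l <;>
      simp [Matrix.mul_apply, Fin.sum_univ_succ, Matrix.one_apply] <;> norm_num
  have e1 : exp (T • A) = (-1 : Matrix (Fin 2) (Fin 2) ℝ) := by
    have : T • A = (T * ω / 2) • ((2/ω) • A) := by
      rw [smul_smul]
      congr 1
      field_simp
    rw [this, exp_smul_of_sq_eq_neg_one _ hj₁]
    have hTω : T * ω / 2 = π := by
      rw [hT]
      field_simp
    rw [hTω]
    simp
  have e2 : exp ((-(T * β)) • k) =
      Real.cos (π * β / ω) • (1 : Matrix (Fin 2) (Fin 2) ℝ) - Real.sin (π * β / ω) • ((2:ℝ) • k) := by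
    have : (-(T * β)) • k = (-(π * β / ω)) • ((2:ℝ) • k) := by
      rw [smul_smul]
      congr 1
      rw [hT]
      field_simp
    rw [this, exp_smul_of_sq_eq_neg_one _ hj₂, Real.cos_neg, Real.sin_neg, neg_smul,
      ← sub_eq_add_neg]
  rw [e1, e2, neg_one_mul, neg_sub]
  subst hk
  ext i l
  fin_cases i <;> fin_cases l <;>
    simp [Matrix.one_apply] <;> ring
end

section
/- The function y(x) = sin(x)/x is strictly monotone (strictly decreasing) on the half-open interval (0, π], and its image on this interval is the half-open interval [0, 1). -/
/-!
Work with the continuous extension `sinc` of `sin x / x` (value 1 at 0). Its derivative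
`(x cos x - sin x) / x²` is negative on `(0, π)`, so `sinc` is strictly antitone on `[0, π]`, and the
intermediate value theorem gives `sinc '' (0, π] = [sinc π, sinc 0) = [0, 1)`.
-/

open Real Set

namespace Real

theorem mul_cos_lt_sin {x : ℝ} (hx₀ : 0 < x) (hxπ : x < π) : x * cos x < sin x := by
  rcases lt_or_ge x (π / 2) with hx | hx
  · have hcos : 0 < cos x := cos_pos_of_mem_Ioo ⟨by linarith [pi_pos], hx⟩
    have htan := lt_tan hx₀ hx
    rwa [tan_eq_sin_div_cos, lt_div_iff₀ hcos] at htan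
  · have hcos : cos x ≤ 0 := cos_nonpos_of_pi_div_two_le_of_le hx (by linarith [pi_pos])
    have hsin : 0 < sin x := sin_pos_of_pos_of_lt_pi hx₀ hxπ
    nlinarith

theorem hasDerivAt_sinc {x : ℝ} (hx : x ≠ 0) :
    HasDerivAt sinc ((x * cos x - sin x) / x ^ 2) x := by
  have hsinc : sinc =ᶠ[nhds x] fun y => sin y / y := by
    filter_upwards [isOpen_ne.mem_nhds hx] with y hy using sinc_of_ne_zero hy
  exact (((hasDerivAt_sin x).div (hasDerivAt_id' x) hx).congr_of_eventuallyEq hsinc).congr_deriv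
    (by ring)

theorem strictAntiOn_sinc : StrictAntiOn sinc (Icc 0 π) := by
  refine strictAntiOn_of_deriv_neg (convex_Icc 0 π) continuous_sinc.continuousOn ?_
  rw [interior_Icc]
  rintro x ⟨hx₀, hxπ⟩
  rw [(hasDerivAt_sinc hx₀.ne').deriv]
  exact div_neg_of_neg_of_pos (sub_neg.mpr (mul_cos_lt_sin hx₀ hxπ)) (by positivity)

theorem sinc_pi : sinc π = 0 := by
  rw [sinc_of_ne_zero pi_ne_zero, sin_pi, zero_div]

end Real

theorem sin_div_self_strictAntiOn_and_image :
    StrictAntiOn (fun x : ℝ => Real.sin x / x) (Set.Ioc 0 π) ∧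
    (fun x : ℝ => Real.sin x / x) '' Set.Ioc 0 π = Set.Ico 0 1 := by
  have hsinc : EqOn sinc (fun x : ℝ => Real.sin x / x) (Ioc 0 π) :=
    fun x hx => sinc_of_ne_zero hx.1.ne'
  refine ⟨(strictAntiOn_sinc.mono Ioc_subset_Icc_self).congr hsinc, ?_⟩
  rw [← hsinc.image_eq, continuous_sinc.continuousOn.image_Ioc_of_strictAntiOn pi_pos.le
    strictAntiOn_sinc, sinc_pi, sinc_zero]
end

section
/- For every real number k > 0 there exists a unique x in the open interval (π/k, 3π/(2k)) such that tan(k·x) = k·tanh(x). Moreover, tan(k·x) − k·tanh(x) > 0 for all x ∈ (0, π/(2k)), and tan(k·x) − k·tanh(x) < 0 for all x ∈ (π/(2k), π/k]. -/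
open Real Set

private lemma myHasDerivAt_tanh (x : ℝ) :
    HasDerivAt Real.tanh (1 / Real.cosh x ^ 2) x := by
  have h : Real.tanh = fun y => Real.sinh y / Real.cosh y :=
    funext fun y => Real.tanh_eq_sinh_div_cosh y
  rw [h]
  have : HasDerivAt (fun y => Real.sinh y / Real.cosh y) ((Real.cosh x * Real.cosh x - Real.sinh x * Real.sinh x) / Real.cosh x ^ 2) x := (Real.hasDerivAt_sinh x).div (Real.hasDerivAt_cosh x) (Real.cosh_pos x).ne'
  convert this using 1
  have h1 : Real.cosh x * Real.cosh x - Real.sinh x * Real.sinh x = 1 := by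
    have := Real.cosh_sq_sub_sinh_sq x
    nlinarith
  rw [h1]

private lemma myContinuous_tanh : Continuous Real.tanh := by
  have h : Real.tanh = fun y => Real.sinh y / Real.cosh y :=
    funext fun y => Real.tanh_eq_sinh_div_cosh y
  rw [h]
  exact Real.continuous_sinh.div Real.continuous_cosh fun x => (Real.cosh_pos x).ne'

private lemma myTanh_pos {x : ℝ} (hx : 0 < x) : 0 < Real.tanh x := by
  rw [Real.tanh_eq_sinh_div_cosh]
  exact div_pos (by rwa [Real.sinh_pos_iff]) (Real.cosh_pos x)

private lemma myTanh_lt_one (x : ℝ) : Real.tanh x < 1 := by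
  rw [Real.tanh_eq_sinh_div_cosh]
  rw [div_lt_one (Real.cosh_pos x)]
  exact Real.sinh_lt_cosh x

private lemma myTanh_lt_self {x : ℝ} (hx : 0 < x) : Real.tanh x < x := by
  have key : StrictMonoOn (fun y => y - Real.tanh y) (Set.Ici 0) := by
    apply strictMonoOn_of_deriv_pos (convex_Ici 0)
    · exact (continuous_id.sub myContinuous_tanh).continuousOn
    · intro y hy
      rw [interior_Ici] at hy
      have hd : HasDerivAt (fun y => y - Real.tanh y) (1 - 1 / Real.cosh y ^ 2) y :=
        (hasDerivAt_id y).sub (myHasDerivAt_tanh y)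
      rw [hd.deriv]
      have h1 : 1 < Real.cosh y := Real.one_lt_cosh.2 (ne_of_gt hy)
      have h2 : 1 / Real.cosh y ^ 2 < 1 := by
        rw [div_lt_one (by positivity)]
        nlinarith
      linarith
  have := key (Set.self_mem_Ici) (Set.mem_Ici.2 hx.le) hx
  simp only [Real.tanh_zero, sub_zero] at this
  linarith

theorem tan_eq_mul_tanh (k : ℝ) (hk : 0 < k) :
    (∃! x : ℝ, x ∈ Set.Ioo (π / k) (3 * π / (2 * k)) ∧ Real.tan (k * x) = k * Real.tanh x) ∧
    (∀ x ∈ Set.Ioo 0 (π / (2 * k)), 0 < Real.tan (k * x) - k * Real.tanh x) ∧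
    (∀ x ∈ Set.Ioc (π / (2 * k)) (π / k), Real.tan (k * x) - k * Real.tanh x < 0) := by
  have hπ := Real.pi_pos
  set f : ℝ → ℝ := fun x => Real.tan (k * x) - k * Real.tanh x with hf
  refine ⟨?_, ?_, ?_⟩
  · -- existence and uniqueness
    -- strict monotonicity of f on the interval
    have hcosneg : ∀ x ∈ Set.Ioo (π / k) (3 * π / (2 * k)), Real.cos (k * x) < 0 := by
      intro x hx
      apply Real.cos_neg_of_pi_div_two_lt_of_lt
      · have h := hx.1
        rw [div_lt_iff₀ hk] at h
        linarith
      · have : k * x < 3 * π / 2 := by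
          have := hx.2
          rw [lt_div_iff₀ (by positivity)] at this
          nlinarith
        linarith
    have hderiv : ∀ x ∈ Set.Ioo (π / k) (3 * π / (2 * k)),
        HasDerivAt f (1 / Real.cos (k * x) ^ 2 * k - k * (1 / Real.cosh x ^ 2)) x := by
      intro x hx
      have h1 : HasDerivAt (fun y : ℝ => k * y) k x := by
        simpa using (hasDerivAt_id x).const_mul k
      have h2 : HasDerivAt (fun y => Real.tan (k * y)) (1 / Real.cos (k * x) ^ 2 * k) x :=
        (Real.hasDerivAt_tan (hcosneg x hx).ne).comp x h1
      exact h2.sub ((myHasDerivAt_tanh x).const_mul k)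
    have hxpos : ∀ x ∈ Set.Ioo (π / k) (3 * π / (2 * k)), 0 < x := by
      intro x hx
      have : 0 < π / k := by positivity
      linarith [hx.1]
    have hmono : StrictMonoOn f (Set.Ioo (π / k) (3 * π / (2 * k))) := by
      apply strictMonoOn_of_deriv_pos (convex_Ioo _ _)
      · intro x hx
        exact ((hderiv x hx).differentiableAt.continuousAt).continuousWithinAt
      · intro x hx
        rw [interior_Ioo] at hx
        rw [(hderiv x hx).deriv]
        have hc := hcosneg x hx
        have hc2 : 0 < Real.cos (k * x) ^ 2 := pow_two_pos_of_ne_zero hc.ne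
        have hc3 : Real.cos (k * x) ^ 2 ≤ 1 := by
          nlinarith [Real.neg_one_le_cos (k * x), Real.cos_le_one (k * x)]
        have h1 : k ≤ 1 / Real.cos (k * x) ^ 2 * k := by
          rw [le_mul_iff_one_le_left hk, le_div_iff₀ hc2]
          nlinarith
        have hch : 1 < Real.cosh x := Real.one_lt_cosh.2 (ne_of_gt (hxpos x hx))
        have h2 : k * (1 / Real.cosh x ^ 2) < k := by
          rw [mul_lt_iff_lt_one_right hk, div_lt_one (by positivity)]
          nlinarith
        linarith
    -- endpoints
    set b : ℝ := (π + Real.arctan (k + 1)) / k with hb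
    have harc1 : 0 < Real.arctan (k + 1) := by
      have := Real.arctan_strictMono (show (0:ℝ) < k + 1 by linarith)
      rwa [Real.arctan_zero] at this
    have harc2 : Real.arctan (k + 1) < π / 2 := Real.arctan_lt_pi_div_two _
    have hab : π / k < b := by
      rw [hb, div_lt_div_iff₀ hk hk]
      nlinarith
    have hbc : b < 3 * π / (2 * k) := by
      rw [hb, div_lt_div_iff₀ hk (by positivity)]
      nlinarith
    have hfa : f (π / k) = -(k * Real.tanh (π / k)) := by
      simp only [hf]
      rw [mul_div_cancel₀ _ hk.ne', Real.tan_pi]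
      ring
    have hfa_neg : f (π / k) < 0 := by
      rw [hfa]
      have := myTanh_pos (show (0:ℝ) < π / k by positivity)
      nlinarith
    have hkb : k * b = Real.arctan (k + 1) + π := by
      rw [hb, mul_div_cancel₀ _ hk.ne']; ring
    have hfb_pos : 0 < f b := by
      simp only [hf]
      rw [hkb, Real.tan_periodic (Real.arctan (k + 1)), Real.tan_arctan]
      have := myTanh_lt_one b
      nlinarith
    -- continuity on [π/k, b]
    have hcont : ContinuousOn f (Set.Icc (π / k) b) := by
      intro x hx
      have hcos : Real.cos (k * x) ≠ 0 := by
        apply ne_of_lt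
        apply Real.cos_neg_of_pi_div_two_lt_of_lt
        · have : π ≤ k * x := by
            have := hx.1
            rw [div_le_iff₀ hk] at this
            linarith
          linarith
        · have : k * x ≤ Real.arctan (k + 1) + π := by
            have := hx.2
            rw [hb, le_div_iff₀ hk] at this
            linarith
          linarith
      have h1 : ContinuousAt (fun y => Real.tan (k * y)) x :=
        (Real.continuousAt_tan.2 hcos).comp (by fun_prop)
      exact (h1.sub ((myContinuous_tanh.continuousAt).const_smul k)).continuousWithinAt
    have hivt := intermediate_value_Ioo hab.le hcont
    have h0 : (0 : ℝ) ∈ Set.Ioo (f (π / k)) (f b) := ⟨hfa_neg, hfb_pos⟩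
    obtain ⟨x, hxmem, hfx⟩ := hivt h0
    have hxmem' : x ∈ Set.Ioo (π / k) (3 * π / (2 * k)) :=
      ⟨hxmem.1, lt_trans hxmem.2 hbc⟩
    refine ⟨x, ⟨hxmem', by have := hfx; simp only [hf] at this; linarith⟩, ?_⟩
    intro y hy
    apply hmono.injOn hy.1 hxmem'
    have hy2 := hy.2
    have hfx' : Real.tan (k * x) - k * Real.tanh x = 0 := by simpa [hf] using hfx
    simp only [hf]
    linarith
  · -- positive part
    intro x hx
    have hx1 : 0 < x := hx.1
    have hkx1 : 0 < k * x := by positivity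
    have hkx2 : k * x < π / 2 := by
      have := hx.2
      rw [lt_div_iff₀ (by positivity)] at this
      nlinarith
    have h1 : k * x < Real.tan (k * x) := Real.lt_tan hkx1 hkx2
    have h2 : Real.tanh x < x := myTanh_lt_self hx1
    nlinarith
  · -- negative part
    intro x hx
    have hx1 : 0 < x := lt_trans (by positivity) hx.1
    have hkx1 : π / 2 < k * x := by
      have := hx.1
      rw [div_lt_iff₀ (by positivity)] at this
      nlinarith
    have hkx2 : k * x ≤ π := by
      have := hx.2
      rw [le_div_iff₀ hk] at this
      linarith
    have htan : Real.tan (k * x) ≤ 0 := by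
      have heq : Real.tan (k * x - π) = Real.tan (k * x) := Real.tan_periodic.sub_eq _
      rw [← heq]
      exact Real.tan_nonpos_of_nonpos_of_neg_pi_div_two_le (by linarith) (by linarith)
    have := myTanh_pos hx1
    nlinarith
end
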